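/- Let d ≥ 2 and let (v,M), (v',M') ∈ ℝ^d ⊕ so(d,ℝ) both satisfy: v_j = 0 for 1 ≤ j ≤ d−1, v_d ≠ 0, M_{j,j+1} ≠ 0 for 1 ≤ j ≤ d−1, and M_{j,k} = 0 for k > j+1 (and likewise for (v',M')). Then there exists A ∈ O_d(ℝ) with A v = v' and A M Aᵀ = M' if and only if ⟨M^k v, M^k v⟩ = ⟨(M')^k v', (M')^k v'⟩ for all k = 0, 1, …, d−1, where ⟨·,·⟩ is the standard inner product on ℝ^d (the case k = 0 reading ⟨v,v⟩ = ⟨v',v'⟩). Moreover, when such an A exists it can be chosen to be a diagonal matrix with diagonal entries in {−1, 1}. (Separation of O_d(ℝ)-orbits on the relative section by the polynomial invariants ⟨M^k v, M^k v⟩.) -/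

import Mathlib

/-!
Record a point `(v, M)` of the section by its reversed Krylov matrix `P`, with columns
`M ^ (d - 1) v, …, M v, v`: the section's conditions make `P` lower triangular with nonzero
diagonal. For skew `M`, `⟪M ^ i v, M ^ j v⟫ = (-1) ^ j ⟪M ^ (i + j) v, v⟫`, which vanishes
when `i + j` is odd and equals `(-1) ^ m ‖M ^ m v‖²` when `i + j = 2m`; so the invariants
determine the matrices `Pᵀ P` and `Pᵀ M P`. When they agree for `(v, M)` and `(v', M')`, the
matrix `A = P' P⁻¹` is orthogonal and satisfies `A P = P'`, hence `A v = v'` and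
`A M Aᵀ = M'`; as a product of lower triangular matrices it is lower triangular, and an orthogonal
triangular matrix is diagonal with entries `±1`. Conversely, conjugating by an orthogonal `A`
sends `M ^ k v` to `A (M ^ k v)` and so preserves the invariants.
-/

open Matrix

namespace Matrix

variable {n R : Type*} [Fintype n]

section Orthogonal

variable [DecidableEq n] [CommRing R]

theorem BlockTriangular.apply_eq_zero_of_mul_transpose_eq_one {α : Type*} [LinearOrder α]
    {A : Matrix n n R} {b : n → α} (hA : A.BlockTriangular b) (hAA : A * Aᵀ = 1) {i j : n}
    (hij : b i ≠ b j) : A i j = 0 := by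
  let := invertibleOfRightInverse A Aᵀ hAA
  have hAT : Aᵀ.BlockTriangular b :=
    inv_eq_right_inv hAA ▸ blockTriangular_inv_of_blockTriangular hA
  rcases hij.lt_or_gt with h | h
  · exact hAT h
  · exact hA h

theorem IsLowerTriangular.isDiag_of_mul_transpose_eq_one [LinearOrder n] {A : Matrix n n R}
    (hA : A.IsLowerTriangular) (hAA : A * Aᵀ = 1) : A.IsDiag :=
  fun _ _ hij => hA.apply_eq_zero_of_mul_transpose_eq_one hAA (OrderDual.toDual.injective.ne hij)

theorem IsDiag.apply_self_eq_one_or_eq_neg_one_of_mul_transpose_eq_one [NoZeroDivisors R]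
    {A : Matrix n n R} (hA : A.IsDiag) (hAA : A * Aᵀ = 1) (i : n) : A i i = 1 ∨ A i i = -1 := by
  rw [← mul_self_eq_one_iff]
  have h := congrFun (congrFun hAA i) i
  rwa [mul_apply, Finset.sum_eq_single i (fun k _ hk => by rw [hA hk.symm, zero_mul])
    (fun hi => absurd (Finset.mem_univ i) hi), transpose_apply, one_apply_eq] at h

theorem dotProduct_mulVec_self_of_transpose_mul_self_eq_one {A : Matrix n n R}
    (hA : Aᵀ * A = 1) (x : n → R) : (A *ᵥ x) ⬝ᵥ (A *ᵥ x) = x ⬝ᵥ x := by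
  rw [dotProduct_mulVec, ← mulVec_transpose, mulVec_mulVec, hA, one_mulVec]

theorem pow_mulVec_dotProduct_self_eq_of_mul_mul_transpose_eq {A M M' : Matrix n n R}
    {v v' : n → R} (hA : A * Aᵀ = 1) (hv : A *ᵥ v = v') (hM : A * M * Aᵀ = M') (k : ℕ) :
    (M' ^ k *ᵥ v') ⬝ᵥ (M' ^ k *ᵥ v') = (M ^ k *ᵥ v) ⬝ᵥ (M ^ k *ᵥ v) := by
  have hA' : Aᵀ * A = 1 := mul_eq_one_comm.mp hA
  have hsemiconj : SemiconjBy A M M' := by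
    rw [SemiconjBy, ← hM, Matrix.mul_assoc _ Aᵀ, hA', Matrix.mul_one]
  have hpow : M' ^ k *ᵥ v' = A *ᵥ (M ^ k *ᵥ v) := by
    rw [← hv, mulVec_mulVec, mulVec_mulVec, (hsemiconj.pow_right k).eq]
  rw [hpow, dotProduct_mulVec_self_of_transpose_mul_self_eq_one hA']

theorem mul_inv_mul_transpose_eq_one_of_transpose_mul_self_eq {P P' : Matrix n n R}
    (hP : IsUnit P.det) (h : Pᵀ * P = P'ᵀ * P') : P' * P⁻¹ * (P' * P⁻¹)ᵀ = 1 := by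
  rw [mul_eq_one_comm, transpose_mul, Matrix.mul_assoc, ← Matrix.mul_assoc P'ᵀ, ← h,
    show P⁻¹ᵀ * (Pᵀ * P * P⁻¹) = (P * P⁻¹)ᵀ * (P * P⁻¹) by
      simp only [transpose_mul, Matrix.mul_assoc],
    mul_nonsing_inv _ hP, transpose_one, Matrix.one_mul]

theorem mul_mul_transpose_eq_of_transpose_mul_mul_eq {A P P' M M' : Matrix n n R}
    (hP : IsUnit P.det) (hA : A * Aᵀ = 1) (hAP : A * P = P')
    (h : Pᵀ * M * P = P'ᵀ * M' * P') : A * M * Aᵀ = M' := by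
  have hPu : IsUnit P := (isUnit_iff_isUnit_det P).mpr hP
  have hPTu : IsUnit Pᵀ := (isUnit_iff_isUnit_det _).mpr (by rwa [det_transpose])
  have hM : M = Aᵀ * M' * A := by
    refine hPTu.mul_left_cancel (hPu.mul_right_cancel ?_)
    rw [h, ← hAP, transpose_mul]
    simp only [Matrix.mul_assoc]
  rw [hM, ← Matrix.mul_assoc, ← Matrix.mul_assoc, hA, Matrix.one_mul, Matrix.mul_assoc, hA,
    Matrix.mul_one]

end Orthogonal

section SkewSymmetric

variable [CommRing R] {M : Matrix n n R}

theorem dotProduct_mulVec_of_transpose_eq_neg (hM : Mᵀ = -M) (x y : n → R) :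
    x ⬝ᵥ (M *ᵥ y) = -((M *ᵥ x) ⬝ᵥ y) := by
  rw [dotProduct_mulVec, ← mulVec_transpose, hM, neg_mulVec, neg_dotProduct]

variable [DecidableEq n]

theorem pow_mulVec_dotProduct_pow_mulVec_of_transpose_eq_neg (hM : Mᵀ = -M) (x y : n → R)
    (i j : ℕ) :
    (M ^ i *ᵥ x) ⬝ᵥ (M ^ j *ᵥ y) = (-1) ^ j * ((M ^ (i + j) *ᵥ x) ⬝ᵥ y) := by
  induction j generalizing i with
  | zero => simp
  | succ j ih =>
    rw [pow_succ', ← mulVec_mulVec, dotProduct_mulVec_of_transpose_eq_neg hM, mulVec_mulVec,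
      ← pow_succ', ih, Nat.add_right_comm, add_assoc]
    ring

theorem pow_mulVec_dotProduct_self_of_odd [IsAddTorsionFree R] (hM : Mᵀ = -M)
    (x : n → R) {k : ℕ} (hk : Odd k) : (M ^ k *ᵥ x) ⬝ᵥ x = 0 := by
  have h := pow_mulVec_dotProduct_pow_mulVec_of_transpose_eq_neg hM x x 0 k
  rwa [pow_zero, one_mulVec, zero_add, dotProduct_comm, hk.neg_one_pow, neg_one_mul,
    self_eq_neg] at h

theorem pow_mulVec_dotProduct_self_of_even (hM : Mᵀ = -M) (x : n → R) (m : ℕ) :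
    (M ^ (m + m) *ᵥ x) ⬝ᵥ x = (-1) ^ m * ((M ^ m *ᵥ x) ⬝ᵥ (M ^ m *ᵥ x)) := by
  rw [pow_mulVec_dotProduct_pow_mulVec_of_transpose_eq_neg hM, ← mul_assoc, ← mul_pow,
    neg_one_mul, neg_neg, one_pow, one_mul]

theorem pow_mulVec_dotProduct_pow_mulVec_eq_of_forall_lt [IsAddTorsionFree R]
    {M' : Matrix n n R} (hM : Mᵀ = -M) (hM' : M'ᵀ = -M') {v v' : n → R} {N : ℕ}
    (h : ∀ k < N, (M ^ k *ᵥ v) ⬝ᵥ (M ^ k *ᵥ v) = (M' ^ k *ᵥ v') ⬝ᵥ (M' ^ k *ᵥ v'))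
    {i j : ℕ} (hij : i + j < 2 * N) :
    (M ^ i *ᵥ v) ⬝ᵥ (M ^ j *ᵥ v) = (M' ^ i *ᵥ v') ⬝ᵥ (M' ^ j *ᵥ v') := by
  rw [pow_mulVec_dotProduct_pow_mulVec_of_transpose_eq_neg hM,
    pow_mulVec_dotProduct_pow_mulVec_of_transpose_eq_neg hM']
  congr 1
  rcases Nat.even_or_odd (i + j) with ⟨m, hm⟩ | hodd
  · rw [hm, pow_mulVec_dotProduct_self_of_even hM, pow_mulVec_dotProduct_self_of_even hM',
      h m (by omega)]
  · rw [pow_mulVec_dotProduct_self_of_odd hM v hodd,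
      pow_mulVec_dotProduct_self_of_odd hM' v' hodd]

end SkewSymmetric

section Krylov

variable {R : Type*} {d : ℕ} {M : Matrix (Fin d) (Fin d) R} {v : Fin d → R}

theorem pow_mulVec_apply_eq_zero [Semiring R]
    (hM : ∀ j k : Fin d, (j : ℕ) + 1 < k → M j k = 0)
    (hv : ∀ j : Fin d, (j : ℕ) + 1 < d → v j = 0) (k : ℕ) {j : Fin d}
    (hj : (j : ℕ) + k + 1 < d) : (M ^ k *ᵥ v) j = 0 := by
  induction k generalizing j with
  | zero => simpa using hv j hj
  | succ k ih =>
    rw [pow_succ', ← mulVec_mulVec]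
    change ∑ l, M j l * (M ^ k *ᵥ v) l = 0
    refine Finset.sum_eq_zero fun l _ => ?_
    by_cases hl : (l : ℕ) ≤ j + 1
    · rw [ih (by omega), mul_zero]
    · rw [hM j l (by omega), zero_mul]

theorem pow_mulVec_apply_ne_zero [Semiring R] [NoZeroDivisors R]
    (hM₁ : ∀ j k : Fin d, (k : ℕ) = j + 1 → M j k ≠ 0)
    (hM₂ : ∀ j k : Fin d, (j : ℕ) + 1 < k → M j k = 0)
    (hv₁ : ∀ j : Fin d, (j : ℕ) + 1 < d → v j = 0)
    (hv₂ : ∀ j : Fin d, (j : ℕ) + 1 = d → v j ≠ 0) (k : ℕ) {j : Fin d}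
    (hj : (j : ℕ) + k + 1 = d) : (M ^ k *ᵥ v) j ≠ 0 := by
  induction k generalizing j with
  | zero => simpa using hv₂ j hj
  | succ k ih =>
    let l : Fin d := ⟨j + 1, by omega⟩
    have hsum : (M *ᵥ (M ^ k *ᵥ v)) j = M j l * (M ^ k *ᵥ v) l := by
      change ∑ l', M j l' * (M ^ k *ᵥ v) l' = _
      refine Finset.sum_eq_single l (fun l' _ hl' => ?_) (fun hl => absurd (Finset.mem_univ l) hl)
      have hl'val : (l' : ℕ) ≠ j + 1 := fun h => hl' (Fin.ext h)
      by_cases hlt : (l' : ℕ) < j + 1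
      · rw [pow_mulVec_apply_eq_zero hM₂ hv₁ k (by omega), mul_zero]
      · rw [hM₂ j l' (by omega), zero_mul]
    rw [pow_succ', ← mulVec_mulVec, hsum]
    exact mul_ne_zero (hM₁ j l rfl) (ih (by simp [l]; omega))

/-- The Krylov matrix with columns `M ^ (d - 1) v, …, M v, v`; the reversed order makes it lower
triangular for `(v, M)` in the section. -/
def reverseKrylov [Semiring R] (M : Matrix (Fin d) (Fin d) R) (v : Fin d → R) :
    Matrix (Fin d) (Fin d) R :=
  of fun j k => (M ^ (k.rev : ℕ) *ᵥ v) j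

theorem reverseKrylov_isLowerTriangular [Semiring R]
    (hM : ∀ j k : Fin d, (j : ℕ) + 1 < k → M j k = 0)
    (hv : ∀ j : Fin d, (j : ℕ) + 1 < d → v j = 0) : (reverseKrylov M v).IsLowerTriangular :=
  fun j k hjk => pow_mulVec_apply_eq_zero hM hv _ (by
    have : (j : ℕ) < k := hjk
    rw [Fin.val_rev]; omega)

theorem isUnit_det_reverseKrylov [Field R]
    (hM₁ : ∀ j k : Fin d, (k : ℕ) = j + 1 → M j k ≠ 0)
    (hM₂ : ∀ j k : Fin d, (j : ℕ) + 1 < k → M j k = 0)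
    (hv₁ : ∀ j : Fin d, (j : ℕ) + 1 < d → v j = 0)
    (hv₂ : ∀ j : Fin d, (j : ℕ) + 1 = d → v j ≠ 0) :
    IsUnit (reverseKrylov M v).det := by
  rw [det_of_isLowerTriangular _ (reverseKrylov_isLowerTriangular hM₂ hv₁), isUnit_iff_ne_zero,
    Finset.prod_ne_zero_iff]
  exact fun k _ => pow_mulVec_apply_ne_zero hM₁ hM₂ hv₁ hv₂ _ (by rw [Fin.val_rev]; omega)

theorem transpose_reverseKrylov_mul_mul_apply [CommSemiring R]
    (N : Matrix (Fin d) (Fin d) R) (i k : Fin d) :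
    ((reverseKrylov M v)ᵀ * N * reverseKrylov M v) i k =
      (M ^ (i.rev : ℕ) *ᵥ v) ⬝ᵥ (N *ᵥ (M ^ (k.rev : ℕ) *ᵥ v)) := by
  rw [Matrix.mul_assoc]
  rfl

theorem mulVec_eq_of_mul_reverseKrylov_eq [Semiring R] {A M' : Matrix (Fin d) (Fin d) R}
    {v' : Fin d → R} (h : A * reverseKrylov M v = reverseKrylov M' v') : A *ᵥ v = v' := by
  rcases Nat.eq_zero_or_pos d with rfl | hd
  · exact Subsingleton.elim _ _
  have hcol : A *ᵥ (M ^ ((⟨0, hd⟩ : Fin d).rev.rev : ℕ) *ᵥ v) =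
      M' ^ ((⟨0, hd⟩ : Fin d).rev.rev : ℕ) *ᵥ v' :=
    congrArg (fun X => X.col (Fin.rev ⟨0, hd⟩)) h
  simpa using hcol

end Krylov

end Matrix

theorem exists_isDiag_conj_of_forall_lt_dotProduct_eq {K : Type*} [Field K] [CharZero K]
    {d : ℕ} {M M' : Matrix (Fin d) (Fin d) K} {v v' : Fin d → K} (hM : Mᵀ = -M)
    (hM' : M'ᵀ = -M')
    (hM₁ : ∀ j k : Fin d, (k : ℕ) = j + 1 → M j k ≠ 0)
    (hM₂ : ∀ j k : Fin d, (j : ℕ) + 1 < k → M j k = 0)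
    (hv₁ : ∀ j : Fin d, (j : ℕ) + 1 < d → v j = 0)
    (hv₂ : ∀ j : Fin d, (j : ℕ) + 1 = d → v j ≠ 0)
    (hM'₂ : ∀ j k : Fin d, (j : ℕ) + 1 < k → M' j k = 0)
    (hv'₁ : ∀ j : Fin d, (j : ℕ) + 1 < d → v' j = 0)
    (h : ∀ k < d,
      (M ^ k *ᵥ v) ⬝ᵥ (M ^ k *ᵥ v) = (M' ^ k *ᵥ v') ⬝ᵥ (M' ^ k *ᵥ v')) :
    ∃ A : Matrix (Fin d) (Fin d) K, A.IsDiag ∧ (∀ i, A i i = 1 ∨ A i i = -1) ∧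
      A * Aᵀ = 1 ∧ A *ᵥ v = v' ∧ A * M * Aᵀ = M' := by
  set P := reverseKrylov M v
  set P' := reverseKrylov M' v'
  have hP : IsUnit P.det := isUnit_det_reverseKrylov hM₁ hM₂ hv₁ hv₂
  have hpair {i j : ℕ} (hij : i + j < 2 * d) :=
    pow_mulVec_dotProduct_pow_mulVec_eq_of_forall_lt hM hM' h hij
  have hG : Pᵀ * P = P'ᵀ * P' := by
    ext i k
    have h₁ := transpose_reverseKrylov_mul_mul_apply (M := M) (v := v) 1 i k
    have h₂ := transpose_reverseKrylov_mul_mul_apply (M := M') (v := v') 1 i k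
    simp only [Matrix.mul_one, one_mulVec] at h₁ h₂
    rw [h₁, h₂, hpair (by omega)]
  have hGM : Pᵀ * M * P = P'ᵀ * M' * P' := by
    ext i k
    rw [transpose_reverseKrylov_mul_mul_apply, transpose_reverseKrylov_mul_mul_apply,
      mulVec_mulVec, mulVec_mulVec, ← pow_succ', ← pow_succ', hpair (by omega)]
  let A := P' * P⁻¹
  have hA : A * Aᵀ = 1 := mul_inv_mul_transpose_eq_one_of_transpose_mul_self_eq hP hG
  have hAP : A * P = P' := nonsing_inv_mul_cancel_right P P' hP
  have hAlower : A.IsLowerTriangular := by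
    let := P.invertibleOfIsUnitDet hP
    exact (reverseKrylov_isLowerTriangular hM'₂ hv'₁).mul
      (blockTriangular_inv_of_blockTriangular (reverseKrylov_isLowerTriangular hM₂ hv₁))
  have hAdiag := hAlower.isDiag_of_mul_transpose_eq_one hA
  exact ⟨A, hAdiag, hAdiag.apply_self_eq_one_or_eq_neg_one_of_mul_transpose_eq_one hA, hA,
    mulVec_eq_of_mul_reverseKrylov_eq hAP,
    mul_mul_transpose_eq_of_transpose_mul_mul_eq hP hA hAP hGM⟩

/-- Separation of `O_d(ℝ)`-orbits on the relative section by the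
polynomial invariants `⟨M^k v, M^k v⟩`, `k = 0, …, d-1`; moreover, when two points
of the section lie on the same orbit, the relating orthogonal matrix can be chosen
diagonal with entries `±1`. (0-based indices.) -/
theorem stmt2 {d : ℕ} (hd : 2 ≤ d)
    (v v' : Fin d → ℝ) (M M' : Matrix (Fin d) (Fin d) ℝ)
    (hMskew : Mᵀ = -M) (hM'skew : M'ᵀ = -M')
    (hv1 : ∀ j : Fin d, (j : ℕ) + 1 < d → v j = 0)
    (hv2 : v ⟨d - 1, by omega⟩ ≠ 0)
    (hM1 : ∀ j k : Fin d, (k : ℕ) = (j : ℕ) + 1 → M j k ≠ 0)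
    (hM2 : ∀ j k : Fin d, (j : ℕ) + 1 < (k : ℕ) → M j k = 0)
    (hv1' : ∀ j : Fin d, (j : ℕ) + 1 < d → v' j = 0)
    (hM2' : ∀ j k : Fin d, (j : ℕ) + 1 < (k : ℕ) → M' j k = 0) :
    ((∃ A : Matrix (Fin d) (Fin d) ℝ,
        A * Aᵀ = 1 ∧ A.mulVec v = v' ∧ A * M * Aᵀ = M') ↔
      (∀ k : ℕ, k < d →
        dotProduct ((M ^ k).mulVec v) ((M ^ k).mulVec v) =
          dotProduct ((M' ^ k).mulVec v') ((M' ^ k).mulVec v'))) ∧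
    ((∃ A : Matrix (Fin d) (Fin d) ℝ,
        A * Aᵀ = 1 ∧ A.mulVec v = v' ∧ A * M * Aᵀ = M') →
      ∃ A : Matrix (Fin d) (Fin d) ℝ,
        (∀ i j : Fin d, i ≠ j → A i j = 0) ∧
        (∀ i : Fin d, A i i = 1 ∨ A i i = -1) ∧
        A * Aᵀ = 1 ∧ A.mulVec v = v' ∧ A * M * Aᵀ = M') := by
  have hvlast : ∀ j : Fin d, (j : ℕ) + 1 = d → v j ≠ 0 := fun j hj => by
    rwa [show j = ⟨d - 1, by omega⟩ from Fin.ext (by simp only; omega)]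
  have forward :
      (∃ A : Matrix (Fin d) (Fin d) ℝ, A * Aᵀ = 1 ∧ A *ᵥ v = v' ∧ A * M * Aᵀ = M') →
      ∀ k < d,
        (M ^ k *ᵥ v) ⬝ᵥ (M ^ k *ᵥ v) = (M' ^ k *ᵥ v') ⬝ᵥ (M' ^ k *ᵥ v') := by
    rintro ⟨A, hA, hAv, hAM⟩ k -
    exact (pow_mulVec_dotProduct_self_eq_of_mul_mul_transpose_eq hA hAv hAM k).symm
  have backward :=
    exists_isDiag_conj_of_forall_lt_dotProduct_eq hMskew hM'skew hM1 hM2 hv1 hvlast hM2' hv1'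
  refine ⟨⟨forward, fun h => ?_⟩, fun hA => ?_⟩
  · obtain ⟨A, -, -, hA⟩ := backward h
    exact ⟨A, hA⟩
  · obtain ⟨A, hdiag, hA⟩ := backward (forward hA)
    exact ⟨A, fun i j hij => hdiag hij, hA⟩
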